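/- arXiv:0708.3755 — 5 statements merged into one kernel-verified Lean document; each statement's English description precedes it below -/
import Mathlib

section
/- For every tuple (p1, p2, p3, p4, r1) in the parameter set S, the multiset of pairs Φ(p1, p2, p3, p4, r1) = {(p1 - r1 - 1, p1 + p2), (p2 + p3 - 1, p3), (r1 + p4, p4)} is invariant under the involution T, i.e., Φ(p1 + p2 - r1 - 1, r1 + 1, p4, p3, p2 - 1) = Φ(p1, p2, p3, p4, r1) as multisets of pairs of natural numbers. -/
/-- The parameter set `S` for the algebras `Λ₁(p₁, p₂, p₃, p₄, r₁)`:
`p₁, p₂ ≥ 1`, `0 ≤ r₁ ≤ p₁ - 1`, `p₂ + p₃ ≥ 2` and `p₄ + r₁ ≥ 1`. -/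
def SOne (x : ℕ × ℕ × ℕ × ℕ × ℕ) : Prop :=
  1 ≤ x.1 ∧ 1 ≤ x.2.1 ∧ x.2.2.2.2 ≤ x.1 - 1 ∧ 2 ≤ x.2.1 + x.2.2.1 ∧ 1 ≤ x.2.2.2.1 + x.2.2.2.2

/-- The involution `T(p₁, p₂, p₃, p₄, r₁) = (p₁ + p₂ - r₁ - 1, r₁ + 1, p₄, p₃, p₂ - 1)`. -/
def Tmap (x : ℕ × ℕ × ℕ × ℕ × ℕ) : ℕ × ℕ × ℕ × ℕ × ℕ :=
  (x.1 + x.2.1 - x.2.2.2.2 - 1, x.2.2.2.2 + 1, x.2.2.2.1, x.2.2.1, x.2.1 - 1)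

/-- The Avella-Alaminos–Geiss invariant of `Λ₁(p₁, p₂, p₃, p₄, r₁)`, the multiset
`{(p₁ - r₁ - 1, p₁ + p₂), (p₂ + p₃ - 1, p₃), (r₁ + p₄, p₄)}`. -/
def Phi (x : ℕ × ℕ × ℕ × ℕ × ℕ) : Multiset (ℕ × ℕ) :=
  {(x.1 - x.2.2.2.2 - 1, x.1 + x.2.1), (x.2.1 + x.2.2.1 - 1, x.2.2.1),
    (x.2.2.2.2 + x.2.2.2.1, x.2.2.2.1)}

/-- The invariant `Φ` is preserved by the involution `T` on the parameter set `S`. -/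
theorem Phi_Tmap :
    ∀ x : ℕ × ℕ × ℕ × ℕ × ℕ, SOne x → Phi (Tmap x) = Phi x := by
  rintro ⟨p1, p2, p3, p4, r1⟩ ⟨h1, h2, h3, h4, h5⟩
  simp only [Phi, Tmap] at *
  have e1 : p1 + p2 - r1 - 1 - (p2 - 1) - 1 = p1 - r1 - 1 := by omega
  have e2 : p1 + p2 - r1 - 1 + (r1 + 1) = p1 + p2 := by omega
  have e3 : r1 + 1 + p4 - 1 = r1 + p4 := by omega
  have e4 : p2 - 1 + p3 = p2 + p3 - 1 := by omega
  rw [e1, e2, e3, e4]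
  exact congrArg _ (Multiset.cons_swap _ _ _)
end

section
/- Call a tuple (p1, p2, p3, p4, r1) in the parameter set S normalized if either p3 > p4, or p3 = p4 and p2 > r1. Then every orbit of the involution T on S contains exactly one normalized tuple. In particular, T(x) = x if and only if p3 = p4 and r1 = p2 - 1, and such fixed points are normalized. -/
/-- A tuple `(p₁, p₂, p₃, p₄, r₁)` is normalized if `p₃ > p₄`, or `p₃ = p₄` and `p₂ > r₁`. -/
def NormalizedOne (x : ℕ × ℕ × ℕ × ℕ × ℕ) : Prop :=
  x.2.2.2.1 < x.2.2.1 ∨ (x.2.2.1 = x.2.2.2.1 ∧ x.2.2.2.2 < x.2.1)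

/-- Every orbit `{x, T x}` of the involution `T` on `S` contains exactly one normalized
tuple; moreover `T x = x` iff `p₃ = p₄` and `r₁ = p₂ - 1`, and fixed points are normalized. -/
theorem normalized_orbit_representative (p1 p2 p3 p4 r1 : ℕ)
    (h : SOne (p1, p2, p3, p4, r1)) :
    (∃! y : ℕ × ℕ × ℕ × ℕ × ℕ,
        (y = (p1, p2, p3, p4, r1) ∨ y = Tmap (p1, p2, p3, p4, r1)) ∧ NormalizedOne y) ∧
    (Tmap (p1, p2, p3, p4, r1) = (p1, p2, p3, p4, r1) ↔ p3 = p4 ∧ r1 = p2 - 1) ∧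
    (Tmap (p1, p2, p3, p4, r1) = (p1, p2, p3, p4, r1) → NormalizedOne (p1, p2, p3, p4, r1)) := by
  obtain ⟨h1, h2, h3, h4, h5⟩ := h
  simp only [SOne, Tmap, NormalizedOne, Prod.mk.injEq] at *
  refine ⟨?_, by omega, by omega⟩
  by_cases hn : p4 < p3 ∨ (p3 = p4 ∧ r1 < p2)
  · refine ⟨(p1, p2, p3, p4, r1), ⟨Or.inl rfl, hn⟩, ?_⟩
    rintro y ⟨(rfl | rfl), hy⟩
    · rfl
    · simp only [Prod.mk.injEq] at hy ⊢
      omega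
  · refine ⟨(p1 + p2 - r1 - 1, r1 + 1, p4, p3, p2 - 1), ⟨Or.inr rfl, ?_⟩, ?_⟩
    · simp only [Prod.mk.injEq]; omega
    · rintro y ⟨(rfl | rfl), hy⟩
      · simp only [Prod.mk.injEq] at hy ⊢
        omega
      · rfl
end

section
/- Let (p1, p2, p3, p4, r1) and (p1', p2', p3', p4', r1') be tuples of natural numbers with p1, p2, p1', p2' ≥ 1, 0 ≤ r1 ≤ p1 - 1, 0 ≤ r1' ≤ p1' - 1, p2 + p3 ≥ 2, p2' + p3' ≥ 2, p4 + r1 ≥ 1, p4' + r1' ≥ 1, and assume both are normalized (i.e., p3 > p4 or (p3 = p4 and p2 > r1), and similarly for the primed tuple). If the multisets {(p1 - r1 - 1, p1 + p2), (p2 + p3 - 1, p3), (r1 + p4, p4)} and {(p1' - r1' - 1, p1' + p2'), (p2' + p3' - 1, p3'), (r1' + p4', p4')} are equal, then (p1, p2, p3, p4, r1) = (p1', p2', p3', p4', r1'). -/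
set_option maxHeartbeats 1000000

lemma pair_eq {α : Type*} {a b c d : α} (h : ({a,b} : Multiset α) = {c,d}) :
    (a=c∧b=d)∨(a=d∧b=c) := by
  have ha : a ∈ ({c,d} : Multiset α) := by rw [← h]; simp
  simp only [Multiset.insert_eq_cons, Multiset.mem_cons, Multiset.mem_singleton] at ha
  simp only [Multiset.insert_eq_cons, ← Multiset.cons_zero] at h
  rcases ha with rfl | rfl
  · left
    exact ⟨rfl, by simpa using (Multiset.cons_inj_right a).mp h⟩
  · right
    refine ⟨rfl, ?_⟩
    rw [Multiset.cons_swap c a] at h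
    simpa using (Multiset.cons_inj_right a).mp h

lemma triple_eq {α : Type*} {a b c d e f : α} (h : ({a,b,c} : Multiset α) = {d,e,f}) :
    (a=d∧b=e∧c=f)∨(a=d∧b=f∧c=e)∨(a=e∧b=d∧c=f)∨(a=e∧b=f∧c=d)∨(a=f∧b=d∧c=e)∨(a=f∧b=e∧c=d) := by
  have ha : a ∈ ({d,e,f} : Multiset α) := by rw [← h]; simp
  simp only [Multiset.insert_eq_cons, Multiset.mem_cons, Multiset.mem_singleton] at ha
  simp only [Multiset.insert_eq_cons, ← Multiset.cons_zero] at h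
  rcases ha with rfl | rfl | rfl
  · have h2 : ({b,c} : Multiset α) = {e,f} := by
      simpa [Multiset.insert_eq_cons] using
        (Multiset.cons_inj_right a).mp h
    rcases pair_eq h2 with ⟨rfl,rfl⟩|⟨rfl,rfl⟩ <;> tauto
  · rw [Multiset.cons_swap d a] at h
    have h2 : ({b,c} : Multiset α) = {d,f} := by
      simpa [Multiset.insert_eq_cons] using
        (Multiset.cons_inj_right a).mp h
    rcases pair_eq h2 with ⟨rfl,rfl⟩|⟨rfl,rfl⟩ <;> tauto
  · rw [Multiset.cons_swap e a, Multiset.cons_swap d a] at h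
    have h2 : ({b,c} : Multiset α) = {d,e} := by
      simpa [Multiset.insert_eq_cons] using
        (Multiset.cons_inj_right a).mp h
    rcases pair_eq h2 with ⟨rfl,rfl⟩|⟨rfl,rfl⟩ <;> tauto

/-- The Avella-Alaminos–Geiss invariant distinguishes the normalized representatives of
the `Λ₁` family: equal invariant multisets of normalized admissible parameter tuples
force equal tuples. -/
theorem Lambda1_invariant_injective_on_normalized
    (p1 p2 p3 p4 r1 p1' p2' p3' p4' r1' : ℕ)
    (hp1 : 1 ≤ p1) (hp2 : 1 ≤ p2) (hr1 : r1 ≤ p1 - 1)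
    (h23 : 2 ≤ p2 + p3) (h41 : 1 ≤ p4 + r1)
    (hp1' : 1 ≤ p1') (hp2' : 1 ≤ p2') (hr1' : r1' ≤ p1' - 1)
    (h23' : 2 ≤ p2' + p3') (h41' : 1 ≤ p4' + r1')
    (hn : p4 < p3 ∨ (p3 = p4 ∧ r1 < p2))
    (hn' : p4' < p3' ∨ (p3' = p4' ∧ r1' < p2'))
    (heq : ({(p1 - r1 - 1, p1 + p2), (p2 + p3 - 1, p3), (r1 + p4, p4)} : Multiset (ℕ × ℕ)) =
      {(p1' - r1' - 1, p1' + p2'), (p2' + p3' - 1, p3'), (r1' + p4', p4')}) :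
    p1 = p1' ∧ p2 = p2' ∧ p3 = p3' ∧ p4 = p4' ∧ r1 = r1' := by
  rcases triple_eq heq with ⟨h1,h2,h3⟩|⟨h1,h2,h3⟩|⟨h1,h2,h3⟩|⟨h1,h2,h3⟩|⟨h1,h2,h3⟩|⟨h1,h2,h3⟩ <;>
    simp only [Prod.mk.injEq] at h1 h2 h3 <;>
    rcases hn with hn|⟨hn1,hn2⟩ <;> rcases hn' with hn'|⟨hn1',hn2'⟩ <;> omega
end

section
/- Let (p1, p2, p3, r1, r2) and (p1', p2', p3', r1', r2') be tuples of natural numbers with p1, p2, p1', p2' ≥ 1, 0 ≤ r1 ≤ p1 - 1, 0 ≤ r2 ≤ p2 - 1, 0 ≤ r1' ≤ p1' - 1, 0 ≤ r2' ≤ p2' - 1, p3 + r1 + r2 ≥ 1, p3' + r1' + r2' ≥ 1, and assume both tuples are normalized (p1 > p2 or (p1 = p2 and r1 ≥ r2), and similarly for the primed tuple). If the multisets {(p1 - r1 - 1, p1), (p2 - r2 - 1, p2), (r1 + r2 + p3, p3)} and {(p1' - r1' - 1, p1'), (p2' - r2' - 1, p2'), (r1' + r2' + p3', p3')} are equal,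 then (p1, p2, p3, r1, r2) = (p1', p2', p3', r1', r2'). -/
private lemma multiset_rot (x y z : ℕ × ℕ) :
    ({x, y, z} : Multiset (ℕ × ℕ)) = {z, x, y} := by
  show x ::ₘ y ::ₘ z ::ₘ 0 = z ::ₘ x ::ₘ y ::ₘ 0
  rw [Multiset.cons_swap y z, Multiset.cons_swap x z]

/-- The Avella-Alaminos–Geiss invariant distinguishes the normalized representatives of
the `Λ₂` family: equal invariant multisets of normalized admissible parameter tuples
force equal tuples. -/
theorem Lambda2_invariant_injective_on_normalized
    (p1 p2 p3 r1 r2 p1' p2' p3' r1' r2' : ℕ)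
    (hp1 : 1 ≤ p1) (hp2 : 1 ≤ p2) (hr1 : r1 ≤ p1 - 1) (hr2 : r2 ≤ p2 - 1)
    (h3 : 1 ≤ p3 + r1 + r2)
    (hp1' : 1 ≤ p1') (hp2' : 1 ≤ p2') (hr1' : r1' ≤ p1' - 1) (hr2' : r2' ≤ p2' - 1)
    (h3' : 1 ≤ p3' + r1' + r2')
    (hn : p2 < p1 ∨ (p1 = p2 ∧ r2 ≤ r1))
    (hn' : p2' < p1' ∨ (p1' = p2' ∧ r2' ≤ r1'))
    (heq : ({(p1 - r1 - 1, p1), (p2 - r2 - 1, p2), (r1 + r2 + p3, p3)} : Multiset (ℕ × ℕ)) =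
      {(p1' - r1' - 1, p1'), (p2' - r2' - 1, p2'), (r1' + r2' + p3', p3')}) :
    p1 = p1' ∧ p2 = p2' ∧ p3 = p3' ∧ r1 = r1' ∧ r2 = r2' := by
  have hc : ((r1 + r2 + p3, p3) : ℕ × ℕ) ∈
      ({(p1' - r1' - 1, p1'), (p2' - r2' - 1, p2'), (r1' + r2' + p3', p3')} : Multiset (ℕ × ℕ)) := by
    rw [← heq]; simp
  simp only [Multiset.insert_eq_cons, Multiset.mem_cons, Multiset.mem_singleton,
    Prod.mk.injEq] at hc
  rcases hc with ⟨h1, h2⟩ | ⟨h1, h2⟩ | ⟨h1, h2⟩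
  · omega
  · omega
  · -- third entries match; reduce to the two-element multisets
    rw [multiset_rot, multiset_rot (p1' - r1' - 1, p1'), h1, h2] at heq
    have heq2 : ({(p1 - r1 - 1, p1), (p2 - r2 - 1, p2)} : Multiset (ℕ × ℕ)) =
        {(p1' - r1' - 1, p1'), (p2' - r2' - 1, p2')} :=
      (Multiset.cons_inj_right _).mp heq
    have ha : ((p1 - r1 - 1, p1) : ℕ × ℕ) ∈
        ({(p1' - r1' - 1, p1'), (p2' - r2' - 1, p2')} : Multiset (ℕ × ℕ)) := by
      rw [← heq2]; simp
    simp only [Multiset.insert_eq_cons, Multiset.mem_cons, Multiset.mem_singleton,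
      Prod.mk.injEq] at ha
    rcases ha with ⟨g1, g2⟩ | ⟨g1, g2⟩
    · rw [g1, g2] at heq2
      have hb : ((p2 - r2 - 1, p2) : ℕ × ℕ) = (p2' - r2' - 1, p2') := by
        have := (Multiset.cons_inj_right _).mp heq2
        simpa using this
      rw [Prod.mk.injEq] at hb
      obtain ⟨k1, k2⟩ := hb
      omega
    · rw [g1, g2, show ({(p1' - r1' - 1, p1'), (p2' - r2' - 1, p2')} : Multiset (ℕ × ℕ)) =
          {(p2' - r2' - 1, p2'), (p1' - r1' - 1, p1')} from Multiset.cons_swap _ _ _] at heq2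
      have hb : ((p2 - r2 - 1, p2) : ℕ × ℕ) = (p1' - r1' - 1, p1') := by
        have := (Multiset.cons_inj_right _).mp heq2
        simpa using this
      rw [Prod.mk.injEq] at hb
      obtain ⟨k1, k2⟩ := hb
      omega
end

section
/- For any natural numbers p1, p2 ≥ 1, p3, p4 ≥ 0, r1 with 0 ≤ r1 ≤ p1 - 1, p2 + p3 ≥ 2, p4 + r1 ≥ 1, and any natural numbers q1, q2 ≥ 1, q3 ≥ 0, s1 with 0 ≤ s1 ≤ q1 - 1, s2 with 0 ≤ s2 ≤ q2 - 1, q3 + s1 + s2 ≥ 1, the multisets {(p1 - r1 - 1, p1 + p2), (p2 + p3 - 1, p3), (r1 + p4, p4)} and {(q1 - s1 - 1, q1), (q2 - s2 - 1, q2), (s1 + s2 + q3, q3)} are never equal. (Hint: the first multiset contains exactly two pairs (n, m) with n ≥ m, while the second contains exactly one such pair.) -/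
/-- The Avella-Alaminos–Geiss invariants of the `Λ₁` and `Λ₂` families are never equal:
no algebra of the `Λ₁` family is derived equivalent to one of the `Λ₂` family. -/
theorem Lambda1_invariant_ne_Lambda2_invariant
    (p1 p2 p3 p4 r1 q1 q2 q3 s1 s2 : ℕ)
    (hp1 : 1 ≤ p1) (hp2 : 1 ≤ p2) (hr1 : r1 ≤ p1 - 1)
    (h23 : 2 ≤ p2 + p3) (h41 : 1 ≤ p4 + r1)
    (hq1 : 1 ≤ q1) (hq2 : 1 ≤ q2) (hs1 : s1 ≤ q1 - 1) (hs2 : s2 ≤ q2 - 1)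
    (h3 : 1 ≤ q3 + s1 + s2) :
    ({(p1 - r1 - 1, p1 + p2), (p2 + p3 - 1, p3), (r1 + p4, p4)} : Multiset (ℕ × ℕ)) ≠
      {(q1 - s1 - 1, q1), (q2 - s2 - 1, q2), (s1 + s2 + q3, q3)} := by
  intro h
  -- Count pairs `(n, m)` with `m ≤ n` on both sides.
  have hc := congrArg (Multiset.countP (fun x : ℕ × ℕ => x.2 ≤ x.1)) h
  have a1 : ¬ (p1 + p2 ≤ p1 - r1 - 1) := by omega
  have a2 : p3 ≤ p2 + p3 - 1 := by omega
  have a3 : p4 ≤ r1 + p4 := by omega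
  have b1 : ¬ (q1 ≤ q1 - s1 - 1) := by omega
  have b2 : ¬ (q2 ≤ q2 - s2 - 1) := by omega
  have b3 : q3 ≤ s1 + s2 + q3 := by omega
  simp only [show ({(p1 - r1 - 1, p1 + p2), (p2 + p3 - 1, p3), (r1 + p4, p4)} :
      Multiset (ℕ × ℕ)) =
      (p1 - r1 - 1, p1 + p2) ::ₘ (p2 + p3 - 1, p3) ::ₘ (r1 + p4, p4) ::ₘ 0 from rfl,
    show ({(q1 - s1 - 1, q1), (q2 - s2 - 1, q2), (s1 + s2 + q3, q3)} :
      Multiset (ℕ × ℕ)) =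
      (q1 - s1 - 1, q1) ::ₘ (q2 - s2 - 1, q2) ::ₘ (s1 + s2 + q3, q3) ::ₘ 0 from rfl,
    Multiset.countP_cons, Multiset.countP_zero] at hc
  simp only [a1, a2, a3, b1, b2, b3, if_true, if_false, if_pos, if_neg,
    not_false_iff] at hc
  omega
end
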